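/- Let X ~ Beta(α, β) with α, β > 0. Define M₁ = E[X], M₂ = E[X·log(X/(1−X))], and M₃ = E[log(X/(1−X))]. Then the denominator M₂ − M₁·M₃ is strictly positive and α = M₁/(M₂ − M₁·M₃), β = (1 − M₁)/(M₂ − M₁·M₃). -/

import Mathlib

open MeasureTheory Real Filter

noncomputable def betaB (a b : ℝ) : ℝ := Real.Gamma a * Real.Gamma b / Real.Gamma (a + b)

/-- digamma function ψ = Γ'/Γ -/
noncomputable def digamma (z : ℝ) : ℝ := deriv Real.Gamma z / Real.Gamma z

/-- Beta(a,b) probability density on (0,1). -/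
noncomputable def betaPDF (a b x : ℝ) : ℝ := x ^ (a - 1) * (1 - x) ^ (b - 1) / betaB a b

/-- Expectation of `h(X)` for `X ~ Beta(a,b)`. -/
noncomputable def betaE (a b : ℝ) (h : ℝ → ℝ) : ℝ :=
  ∫ x in Set.Ioo (0:ℝ) 1, h x * betaPDF a b x

/-- Beta(a,b) measure on ℝ. -/
noncomputable def betaMeasure (a b : ℝ) : Measure ℝ :=
  volume.withDensity (fun x => ENNReal.ofReal (Set.indicator (Set.Ioo (0:ℝ) 1) (betaPDF a b) x))

/-!
With `w(x) = x^(a-1) (1-x)^(b-1)`, the function `x^a (1-x)^b logit x` vanishes at both ends of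
`(0,1)` and, since `logit' x = 1 / (x (1-x))`, has derivative `(a - (a+b) x) logit(x) w(x) + w(x)`.
Integrating gives the Stein identity `E[(a - (a+b) X) logit X] = -1`, i.e.
`M₂ - M₁ M₃ = 1/(a+b)`; together with `M₁ = a/(a+b)` both identities follow.
-/

open Set Topology

noncomputable def betaKernel (a b x : ℝ) : ℝ := x ^ (a - 1) * (1 - x) ^ (b - 1)

section

variable {a b : ℝ}

lemma betaKernel_one_sub (a b x : ℝ) : betaKernel a b (1 - x) = betaKernel b a x := by
  rw [betaKernel, betaKernel, sub_sub_cancel, mul_comm]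

lemma betaKernel_add_one_left {x : ℝ} (hx : 0 < x) :
    betaKernel (a + 1) b x = x * betaKernel a b x := by
  rw [betaKernel, betaKernel, add_sub_cancel_right, rpow_sub_one hx.ne']
  field_simp

lemma betaB_pos (ha : 0 < a) (hb : 0 < b) : 0 < betaB a b := ProbabilityTheory.beta_pos ha hb

lemma betaB_add_one_left (ha : 0 < a) (hb : 0 < b) :
    betaB (a + 1) b = a / (a + b) * betaB a b := by
  have hab : a + b ≠ 0 := by positivity
  rw [betaB, betaB, Gamma_add_one ha.ne', add_right_comm, Gamma_add_one hab]
  field_simp [(Gamma_pos_of_pos (add_pos ha hb)).ne']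

lemma ofReal_betaKernel {x : ℝ} (hx₀ : 0 ≤ x) (hx₁ : x ≤ 1) :
    (betaKernel a b x : ℂ) = (x : ℂ) ^ ((a : ℂ) - 1) * (1 - (x : ℂ)) ^ ((b : ℂ) - 1) := by
  rw [betaKernel, Complex.ofReal_mul, Complex.ofReal_cpow hx₀, Complex.ofReal_cpow (by linarith)]
  push_cast
  rfl

lemma continuousOn_betaKernel : ContinuousOn (betaKernel a b) (Ioo 0 1) :=
  (continuousOn_id.rpow_const fun _ hx => Or.inl hx.1.ne').mul
    ((continuousOn_const.sub continuousOn_id).rpow_const fun _ hx => Or.inl (sub_pos.2 hx.2).ne')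

lemma intervalIntegrable_betaKernel (ha : 0 < a) (hb : 0 < b) :
    IntervalIntegrable (betaKernel a b) volume 0 1 := by
  have h := Complex.betaIntegral_convergent (u := a) (v := b) (by simpa) (by simpa)
  rw [intervalIntegrable_iff_integrableOn_Ioc_of_le zero_le_one] at h ⊢
  refine IntegrableOn.congr_fun h.re (fun x hx => ?_) measurableSet_Ioc
  rw [← ofReal_betaKernel hx.1.le hx.2, RCLike.re_to_complex, Complex.ofReal_re]

lemma integral_betaKernel (ha : 0 < a) (hb : 0 < b) :
    ∫ x in (0 : ℝ)..1, betaKernel a b x = betaB a b := by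
  have h : Complex.betaIntegral a b = ((∫ x in (0 : ℝ)..1, betaKernel a b x : ℝ) : ℂ) := by
    rw [Complex.betaIntegral, ← intervalIntegral.integral_ofReal]
    refine intervalIntegral.integral_congr_ae (ae_of_all _ fun x hx => ?_)
    rw [uIoc_of_le zero_le_one] at hx
    exact (ofReal_betaKernel hx.1.le hx.2).symm
  rw [show betaB a b = ProbabilityTheory.beta a b from rfl,
    ProbabilityTheory.beta_eq_betaIntegralReal a b ha hb, h, Complex.ofReal_re]

lemma intervalIntegrable_log_mul_betaKernel (ha : 0 < a) (hb : 0 < b) :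
    IntervalIntegrable (fun x => log x * betaKernel a b x) volume 0 1 := by
  rw [intervalIntegrable_iff_integrableOn_Ioo_of_le zero_le_one]
  have hdom := ((intervalIntegrable_iff_integrableOn_Ioo_of_le zero_le_one).1
    (intervalIntegrable_betaKernel (half_pos ha) hb)).const_mul (2 / a)
  refine hdom.mono' ?_ (ae_restrict_of_forall_mem measurableSet_Ioo fun x hx => ?_)
  · exact ((continuousOn_log.mono fun x hx => hx.1.ne').mul
      continuousOn_betaKernel).aestronglyMeasurable measurableSet_Ioo
  · -- `|log x · x^(a/2)| < 2/a` absorbs the logarithm into half of the exponent `a`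
    have hlog := (abs_log_mul_self_rpow_lt x (a / 2) hx.1 hx.2.le (half_pos ha)).le
    have hsplit : betaKernel a b x = x ^ (a / 2) * betaKernel (a / 2) b x := by
      rw [betaKernel, betaKernel, ← mul_assoc, ← rpow_add hx.1]
      ring_nf
    have hk : 0 ≤ betaKernel (a / 2) b x :=
      mul_nonneg (rpow_nonneg hx.1.le _) (rpow_nonneg (sub_pos.2 hx.2).le _)
    rw [norm_eq_abs, hsplit, ← mul_assoc, abs_mul, abs_of_nonneg hk]
    calc |log x * x ^ (a / 2)| * betaKernel (a / 2) b x ≤ 1 / (a / 2) * betaKernel (a / 2) b x :=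
          mul_le_mul_of_nonneg_right hlog hk
      _ = 2 / a * betaKernel (a / 2) b x := by rw [one_div_div]

lemma intervalIntegrable_log_one_sub_mul_betaKernel (ha : 0 < a) (hb : 0 < b) :
    IntervalIntegrable (fun x => log (1 - x) * betaKernel a b x) volume 0 1 := by
  simpa [betaKernel_one_sub] using
    ((intervalIntegrable_log_mul_betaKernel hb ha).comp_sub_left 1).symm

noncomputable def betaLogitFlux (a b x : ℝ) : ℝ := x ^ a * (1 - x) ^ b * (log x - log (1 - x))

lemma betaLogitFlux_one_sub (a b x : ℝ) : betaLogitFlux a b (1 - x) = -betaLogitFlux b a x := by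
  rw [betaLogitFlux, betaLogitFlux, sub_sub_cancel]
  ring

lemma hasDerivAt_betaLogitFlux {x : ℝ} (hx : x ∈ Ioo (0 : ℝ) 1) :
    HasDerivAt (betaLogitFlux a b)
      (a * ((log x - log (1 - x)) * betaKernel a b x)
        - (a + b) * ((log x - log (1 - x)) * betaKernel (a + 1) b x) + betaKernel a b x) x := by
  have hx₀ : x ≠ 0 := hx.1.ne'
  have hx₁ : 1 - x ≠ 0 := (sub_pos.2 hx.2).ne'
  have hsub : HasDerivAt (fun y => 1 - y) (-1) x := by simpa using (hasDerivAt_id x).const_sub 1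
  have h : HasDerivAt (fun y => y ^ a * (1 - y) ^ b * (log y - log (1 - y))) _ x :=
    ((hasDerivAt_rpow_const (p := a) (Or.inl hx₀)).mul
      ((hasDerivAt_rpow_const (p := b) (Or.inl hx₁)).comp x hsub)).mul
      ((hasDerivAt_log hx₀).sub ((hasDerivAt_log hx₁).comp x hsub))
  refine h.congr_deriv ?_
  simp only [Function.comp_apply, Pi.mul_apply]
  rw [betaKernel_add_one_left hx.1, betaKernel, rpow_sub_one hx₀, rpow_sub_one hx₁]
  field_simp
  ring

lemma tendsto_betaLogitFlux_nhdsGT_zero (ha : 0 < a) (hb : 0 < b) :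
    Tendsto (betaLogitFlux a b) (𝓝[>] 0) (𝓝 0) := by
  have hsub : ContinuousAt (fun x : ℝ => 1 - x) 0 := by fun_prop
  have hpow : Tendsto (fun x : ℝ => (1 - x) ^ b) (𝓝[>] 0) (𝓝 1) := by
    simpa using (hsub.rpow_const (Or.inr hb.le)).tendsto.mono_left nhdsWithin_le_nhds
  have hlog : Tendsto (fun x : ℝ => (1 - x) ^ b * log (1 - x)) (𝓝[>] 0) (𝓝 0) := by
    simpa [Function.comp_def, Pi.mul_def] using ((hsub.rpow_const (Or.inr hb.le)).mul
      ((continuousAt_log (by norm_num)).comp hsub)).tendsto.mono_left nhdsWithin_le_nhds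
  have hxa : Tendsto (fun x : ℝ => x ^ a) (𝓝[>] 0) (𝓝 0) := by
    simpa [zero_rpow ha.ne'] using (continuousAt_rpow_const 0 a (Or.inr ha.le)).tendsto.mono_left
      nhdsWithin_le_nhds
  have h := ((tendsto_log_mul_rpow_nhdsGT_zero ha).mul hpow).sub (hxa.mul hlog)
  rw [zero_mul, zero_mul, sub_zero] at h
  exact h.congr fun x => by rw [betaLogitFlux]; ring

lemma tendsto_betaLogitFlux_nhdsLT_one (ha : 0 < a) (hb : 0 < b) :
    Tendsto (betaLogitFlux a b) (𝓝[<] 1) (𝓝 0) := by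
  have hreflect : Tendsto (fun x : ℝ => 1 - x) (𝓝[<] 1) (𝓝[>] 0) := by
    have hsub : ContinuousAt (fun x : ℝ => 1 - x) 1 := by fun_prop
    refine tendsto_nhdsWithin_of_tendsto_nhds_of_eventually_within _ ?_ ?_
    · simpa using hsub.tendsto.mono_left nhdsWithin_le_nhds
    · filter_upwards [self_mem_nhdsWithin] with x hx using mem_Ioi.2 (sub_pos.2 hx)
  simpa [betaLogitFlux_one_sub] using
    ((tendsto_betaLogitFlux_nhdsGT_zero hb ha).comp hreflect).neg

lemma intervalIntegrable_logit_mul_betaKernel (ha : 0 < a) (hb : 0 < b) :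
    IntervalIntegrable (fun x => (log x - log (1 - x)) * betaKernel a b x) volume 0 1 := by
  simpa only [sub_mul] using (intervalIntegrable_log_mul_betaKernel ha hb).sub
    (intervalIntegrable_log_one_sub_mul_betaKernel ha hb)

theorem integral_logit_mul_betaKernel_stein (ha : 0 < a) (hb : 0 < b) :
    a * (∫ x in (0 : ℝ)..1, (log x - log (1 - x)) * betaKernel a b x)
      - (a + b) * ∫ x in (0 : ℝ)..1, (log x - log (1 - x)) * betaKernel (a + 1) b x
      = -betaB a b := by
  have hJ := intervalIntegrable_logit_mul_betaKernel ha hb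
  have hK := intervalIntegrable_logit_mul_betaKernel (add_pos ha one_pos) hb
  have hFTC := intervalIntegral.integral_eq_sub_of_hasDerivAt_of_tendsto zero_lt_one
    (fun x hx => hasDerivAt_betaLogitFlux (a := a) (b := b) hx)
    (((hJ.const_mul a).sub (hK.const_mul (a + b))).add (intervalIntegrable_betaKernel ha hb))
    (tendsto_betaLogitFlux_nhdsGT_zero ha hb) (tendsto_betaLogitFlux_nhdsLT_one ha hb)
  rw [intervalIntegral.integral_add ((hJ.const_mul a).sub (hK.const_mul (a + b)))
      (intervalIntegrable_betaKernel ha hb), intervalIntegral.integral_sub (hJ.const_mul a)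
      (hK.const_mul (a + b)), intervalIntegral.integral_const_mul,
    intervalIntegral.integral_const_mul, integral_betaKernel ha hb] at hFTC
  linarith

lemma betaE_eq_integral_div {h g : ℝ → ℝ}
    (hg : ∀ x ∈ Ioo (0 : ℝ) 1, h x * betaKernel a b x = g x) :
    betaE a b h = (∫ x in (0 : ℝ)..1, g x) / betaB a b := by
  rw [betaE, intervalIntegral.integral_of_le zero_le_one, integral_Ioc_eq_integral_Ioo,
    ← integral_div]
  refine setIntegral_congr_fun measurableSet_Ioo fun x hx => ?_
  rw [betaPDF, ← hg x hx, betaKernel, mul_div_assoc']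

lemma betaE_id (ha : 0 < a) (hb : 0 < b) : betaE a b (fun x => x) = a / (a + b) := by
  rw [betaE_eq_integral_div fun x hx => (betaKernel_add_one_left hx.1).symm,
    integral_betaKernel (add_pos ha one_pos) hb, betaB_add_one_left ha hb,
    mul_div_cancel_right₀ _ (betaB_pos ha hb).ne']

lemma betaE_logit : betaE a b (fun x => log (x / (1 - x)))
    = (∫ x in (0 : ℝ)..1, (log x - log (1 - x)) * betaKernel a b x) / betaB a b :=
  betaE_eq_integral_div fun x hx => by rw [log_div hx.1.ne' (sub_pos.2 hx.2).ne']

lemma betaE_mul_logit : betaE a b (fun x => x * log (x / (1 - x)))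
    = (∫ x in (0 : ℝ)..1, (log x - log (1 - x)) * betaKernel (a + 1) b x) / betaB a b :=
  betaE_eq_integral_div fun x hx => by
    rw [log_div hx.1.ne' (sub_pos.2 hx.2).ne', betaKernel_add_one_left hx.1]
    ring

theorem betaE_mul_logit_sub_mul (ha : 0 < a) (hb : 0 < b) :
    betaE a b (fun x => x * log (x / (1 - x)))
      - betaE a b (fun x => x) * betaE a b (fun x => log (x / (1 - x))) = 1 / (a + b) := by
  rw [betaE_mul_logit, betaE_id ha hb, betaE_logit]
  have hB := (betaB_pos ha hb).ne'
  have hab := (add_pos ha hb).ne'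
  field_simp
  linear_combination -integral_logit_mul_betaKernel_stein ha hb

end

theorem beta_tamae_population_identities (α β : ℝ) (hα : 0 < α) (hβ : 0 < β) :
    0 < betaE α β (fun x => x * Real.log (x / (1 - x)))
        - betaE α β (fun x => x) * betaE α β (fun x => Real.log (x / (1 - x))) ∧
    α = betaE α β (fun x => x) /
        (betaE α β (fun x => x * Real.log (x / (1 - x)))
          - betaE α β (fun x => x) * betaE α β (fun x => Real.log (x / (1 - x)))) ∧
    β = (1 - betaE α β (fun x => x)) /
        (betaE α β (fun x => x * Real.log (x / (1 - x)))
          - betaE α β (fun x => x) * betaE α β (fun x => Real.log (x / (1 - x)))) := by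
  have hab : α + β ≠ 0 := (add_pos hα hβ).ne'
  rw [betaE_mul_logit_sub_mul hα hβ, betaE_id hα hβ]
  exact ⟨by positivity, by field_simp, by field_simp; ring⟩
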